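/- For any partition λ of n, the number of rectangles in the Young diagram of λ equals Σ_{u∈λ} h(u) + (1/2) Σ_{u∈λ} h̃(u)², where h̃(u) is the partial hook length of u; equivalently, 2 Σ_{u=(i,j)∈λ} ij = 2 Σ_{u∈λ} h(u) + Σ_{u∈λ} h̃(u)². -/

import Mathlib

open Finset

/-- A Young diagram: a finite set of cells `(i, j)` with 1-based coordinates,
closed under decreasing either coordinate (down to 1).  Its rows are the
intervals `[1, λ_i]` for a weakly decreasing sequence `λ`. -/
def IsYoung (Y : Finset (ℕ × ℕ)) : Prop :=
  (∀ p ∈ Y, 1 ≤ p.1 ∧ 1 ≤ p.2) ∧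
    ∀ p ∈ Y, ∀ q : ℕ × ℕ, 1 ≤ q.1 → 1 ≤ q.2 → q.1 ≤ p.1 → q.2 ≤ p.2 → q ∈ Y

/-- `row Y i = λ_i`, the length of the `i`-th row. -/
def row (Y : Finset (ℕ × ℕ)) (i : ℕ) : ℕ := (Y.filter fun p => p.1 = i).card

/-- `col Y j = λ'_j`, the length of the `j`-th column (conjugate partition). -/
def col (Y : Finset (ℕ × ℕ)) (j : ℕ) : ℕ := (Y.filter fun p => p.2 = j).card

/-- Hook length `h(u) = λ_i + λ'_j - i - j + 1` of the cell `u = (i, j)`. -/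
def hk (Y : Finset (ℕ × ℕ)) (u : ℕ × ℕ) : ℤ :=
  (row Y u.1 : ℤ) + (col Y u.2 : ℤ) - u.1 - u.2 + 1

/-- Content `c(u) = j - i` of the cell `u = (i, j)`. -/
def ct (u : ℕ × ℕ) : ℤ := (u.2 : ℤ) - (u.1 : ℤ)

/-- Rectangles contained in the Young diagram, encoded by the pair
(north-west corner, south-east corner); such a rectangle lies in `Y`
iff its south-east corner does (and the NW corner is a cell). -/
def rects (Y : Finset (ℕ × ℕ)) : Finset ((ℕ × ℕ) × ℕ × ℕ) :=
  (Y ×ˢ Y).filter fun pq => pq.1.1 ≤ pq.2.1 ∧ pq.1.2 ≤ pq.2.2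

/-- Partial hook length: `0` on the diagonal, the arm `λ_i - j` below it,
and the leg `λ'_j - i` above it. -/
def phk (Y : Finset (ℕ × ℕ)) (u : ℕ × ℕ) : ℤ :=
  if u.1 = u.2 then 0
  else if u.2 < u.1 then (row Y u.1 : ℤ) - u.2
  else (col Y u.2 : ℤ) - u.1

/-! Counting rectangles by their south-east corner gives `#rects = ∑ i j`, and reflecting each
row `j ↦ λ_i + 1 - j` (each column, after transposing) gives `∑ h(u) = ∑ (i + j - 1)`. It remains
to show `∑ h̃(u)² = 2 ∑ (i - 1)(j - 1)`. The left side is the sum of the squared arms of the cells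
below the diagonal plus that of the squared legs of the cells above it, and the legs are the
arms of the transposed diagram. Removing the last cell `(r, c)` of the last row shortens by one
the arms of the cells `(r, j)` and the legs of the cells `(i, c)` with `i, j < m := min r c`, so
`∑ h̃²` drops by `(c - 1)² - (c - m)² + (r - 1)² - (r - m)² = 2 (r - 1)(c - 1)`, the
contribution of `(r, c)` to the right side; induct. -/

def transpose (Y : Finset (ℕ × ℕ)) : Finset (ℕ × ℕ) :=
  Y.map (Equiv.prodComm ℕ ℕ).toEmbedding

@[simp]
lemma mem_transpose {Y : Finset (ℕ × ℕ)} {p : ℕ × ℕ} : p ∈ transpose Y ↔ p.swap ∈ Y :=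
  mem_map_equiv

lemma sum_transpose {M : Type*} [AddCommMonoid M] (Y : Finset (ℕ × ℕ)) (f : ℕ × ℕ → M) :
    ∑ v ∈ transpose Y, f v = ∑ u ∈ Y, f u.swap :=
  sum_map _ _ _

lemma row_transpose (Y : Finset (ℕ × ℕ)) : row (transpose Y) = col Y := by
  ext i
  rw [row, col, transpose, filter_map, card_map]
  rfl

lemma transpose_erase (Y : Finset (ℕ × ℕ)) (p : ℕ × ℕ) :
    transpose (Y.erase p) = (transpose Y).erase p.swap :=
  map_erase _ _ _

lemma row_erase_of_ne (Y : Finset (ℕ × ℕ)) {r c i : ℕ} (hi : i ≠ r) :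
    row (Y.erase (r, c)) i = row Y i := by
  rw [row, filter_erase, erase_eq_of_notMem fun h => hi (mem_filter.1 h).2.symm, row]

lemma row_erase_self {Y : Finset (ℕ × ℕ)} {r c : ℕ} (hu : (r, c) ∈ Y) :
    row (Y.erase (r, c)) r = row Y r - 1 := by
  have hu' : (r, c) ∈ Y.filter (·.1 = r) := mem_filter.2 ⟨hu, rfl⟩
  rw [row, filter_erase, card_erase_of_mem hu', row]

def armSqSum (Y : Finset (ℕ × ℕ)) : ℤ := ∑ u ∈ Y with u.2 < u.1, ((row Y u.1 : ℤ) - u.2) ^ 2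

lemma sum_phk_sq_eq_armSqSum (Y : Finset (ℕ × ℕ)) :
    ∑ u ∈ Y, phk Y u ^ 2 = armSqSum Y + armSqSum (transpose Y) := by
  rw [armSqSum, armSqSum, sum_filter, sum_filter, sum_transpose, ← sum_add_distrib]
  refine sum_congr rfl fun u _ => ?_
  simp only [Prod.fst_swap, Prod.snd_swap, row_transpose, phk]
  split_ifs <;> omega

lemma sum_Ico_two_mul_sub_one (c : ℕ) {m : ℕ} (hm : 1 ≤ m) :
    ∑ j ∈ Ico 1 m, (2 * ((c : ℤ) - j) - 1) = ((c : ℤ) - 1) ^ 2 - ((c : ℤ) - m) ^ 2 := by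
  induction m, hm using Nat.le_induction with
  | base => simp
  | succ m hm ih =>
    rw [sum_Ico_succ_top hm, ih]
    push_cast
    ring

namespace IsYoung

variable {Y : Finset (ℕ × ℕ)}

lemma transpose (hY : IsYoung Y) : IsYoung (transpose Y) := by
  refine ⟨fun p hp => (hY.1 _ (mem_transpose.1 hp)).symm, fun p hp q hq1 hq2 hq3 hq4 => ?_⟩
  exact mem_transpose.2 (hY.2 _ (mem_transpose.1 hp) q.swap hq2 hq1 hq4 hq3)

lemma mem_iff_le_row (hY : IsYoung Y) (i j : ℕ) : (i, j) ∈ Y ↔ 1 ≤ j ∧ j ≤ row Y i := by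
  obtain ⟨m, hm⟩ : ∃ m, ∀ b, (i, b) ∈ Y ↔ 1 ≤ b ∧ b ≤ m := by
    refine ⟨(Y.filter (·.1 = i)).sup Prod.snd, fun b => ⟨fun hb => ?_, fun ⟨hb1, hbm⟩ => ?_⟩⟩
    · have hb' : (i, b) ∈ Y.filter (·.1 = i) := mem_filter.2 ⟨hb, rfl⟩
      exact ⟨(hY.1 _ hb).2, le_sup (f := Prod.snd) hb'⟩
    rcases (Y.filter (·.1 = i)).eq_empty_or_nonempty with hempty | hne
    · simp only [hempty, sup_empty, bot_eq_zero'] at hbm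
      omega
    obtain ⟨p, hp, hpm⟩ := exists_mem_eq_sup _ hne Prod.snd
    obtain ⟨hpY, rfl⟩ := mem_filter.1 hp
    exact hY.2 p hpY _ (hY.1 p hpY).1 hb1 le_rfl (hpm ▸ hbm)
  have hrow : Y.filter (·.1 = i) = (Icc 1 m).image (Prod.mk i) := by
    ext ⟨a, b⟩
    simp only [mem_filter, mem_image, mem_Icc, Prod.mk.injEq]
    constructor
    · rintro ⟨hab, rfl⟩
      exact ⟨b, (hm b).1 hab, rfl, rfl⟩
    · rintro ⟨b, hb, rfl, rfl⟩
      exact ⟨(hm b).2 hb, rfl⟩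
  rw [hm, row, hrow, card_image_of_injective _ (Prod.mk_right_injective i), Nat.card_Icc,
    Nat.add_sub_cancel]

lemma mem_iff_le_col (hY : IsYoung Y) (i j : ℕ) : (i, j) ∈ Y ↔ 1 ≤ i ∧ i ≤ col Y j := by
  simpa [row_transpose] using hY.transpose.mem_iff_le_row j i

lemma card_rects (hY : IsYoung Y) : (rects Y).card = ∑ u ∈ Y, u.1 * u.2 := by
  rw [card_eq_sum_card_fiberwise (s := rects Y) (f := Prod.snd) (t := Y)
    fun pq hpq => (mem_product.1 (mem_filter.1 hpq).1).2]
  refine sum_congr rfl fun q hq => ?_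
  have hfiber : (rects Y).filter (·.2 = q) = (Icc 1 q.1 ×ˢ Icc 1 q.2).image (·, q) := by
    ext ⟨p, q'⟩
    simp only [rects, mem_filter, mem_product, mem_image, mem_Icc, Prod.mk.injEq]
    constructor
    · rintro ⟨⟨⟨hp, -⟩, h1, h2⟩, rfl⟩
      exact ⟨p, ⟨⟨(hY.1 p hp).1, h1⟩, (hY.1 p hp).2, h2⟩, rfl, rfl⟩
    · rintro ⟨p, ⟨⟨h1, h2⟩, h3, h4⟩, rfl, rfl⟩
      exact ⟨⟨⟨hY.2 q hq p h1 h3 h2 h4, hq⟩, h2, h4⟩, rfl⟩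
  rw [hfiber, card_image_of_injective _ fun a b h => (Prod.mk.inj h).1, card_product,
    Nat.card_Icc, Nat.card_Icc, Nat.add_sub_cancel, Nat.add_sub_cancel]

lemma sum_arm (hY : IsYoung Y) :
    ∑ u ∈ Y, ((row Y u.1 : ℤ) - u.2) = ∑ u ∈ Y, ((u.2 : ℤ) - 1) := by
  have hmem : ∀ u ∈ Y, 1 ≤ u.2 ∧ u.2 ≤ row Y u.1 := fun u hu => (hY.mem_iff_le_row u.1 u.2).1 hu
  have hreflect : ∀ u ∈ Y, (u.1, row Y u.1 + 1 - u.2) ∈ Y := fun u hu =>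
    (hY.mem_iff_le_row _ _).2 (by have := hmem u hu; omega)
  refine sum_nbij' (fun u => (u.1, row Y u.1 + 1 - u.2)) (fun u => (u.1, row Y u.1 + 1 - u.2))
    hreflect hreflect (fun u hu => Prod.ext rfl ?_) (fun u hu => Prod.ext rfl ?_)
    (fun u hu => ?_) <;>
  · have := hmem u hu
    dsimp only
    omega

lemma sum_leg (hY : IsYoung Y) :
    ∑ u ∈ Y, ((col Y u.2 : ℤ) - u.1) = ∑ u ∈ Y, ((u.1 : ℤ) - 1) := by
  simpa only [sum_transpose, row_transpose, Prod.fst_swap, Prod.snd_swap] using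
    hY.transpose.sum_arm

lemma sum_hk (hY : IsYoung Y) : ∑ u ∈ Y, hk Y u = ∑ u ∈ Y, ((u.1 : ℤ) + u.2 - 1) := by
  have hsplit : ∀ u, hk Y u = ((row Y u.1 : ℤ) - u.2) + ((col Y u.2 : ℤ) - u.1) + 1 := fun u => by
    rw [hk]; ring
  simp only [hsplit, sum_add_distrib, hY.sum_arm, hY.sum_leg, sum_sub_distrib]
  ring

lemma exists_corner (hY : IsYoung Y) (hne : Y.Nonempty) :
    ∃ r c, (r, c) ∈ Y ∧ row Y r = c ∧ col Y c = r := by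
  obtain ⟨p, hp, hmax⟩ := Y.exists_max_image Prod.fst hne
  obtain ⟨hp1, hp2⟩ := (hY.mem_iff_le_row p.1 p.2).1 hp
  have hu : (p.1, row Y p.1) ∈ Y := (hY.mem_iff_le_row _ _).2 ⟨hp1.trans hp2, le_rfl⟩
  obtain ⟨hu1, hu2⟩ := (hY.mem_iff_le_col _ _).1 hu
  have hbottom := hmax _ ((hY.mem_iff_le_col _ _).2 ⟨hu1.trans hu2, le_rfl⟩)
  exact ⟨p.1, row Y p.1, hu, rfl, le_antisymm hbottom hu2⟩

lemma erase_corner (hY : IsYoung Y) {r c : ℕ} (hu : (r, c) ∈ Y) (hrow : row Y r = c)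
    (hcol : col Y c = r) : IsYoung (Y.erase (r, c)) := by
  refine ⟨fun p hp => hY.1 p (mem_of_mem_erase hp), fun p hp q hq1 hq2 hq3 hq4 => ?_⟩
  obtain ⟨hpu, hpY⟩ := mem_erase.1 hp
  refine mem_erase.2 ⟨?_, hY.2 p hpY q hq1 hq2 hq3 hq4⟩
  rintro rfl
  have hrp : (r, p.2) ∈ Y := hY.2 p hpY _ (hY.1 _ hu).1 (hY.1 _ hpY).2 hq3 le_rfl
  have hpc : (p.1, c) ∈ Y := hY.2 p hpY _ (hY.1 _ hpY).1 (hY.1 _ hu).2 le_rfl hq4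
  have h2 := ((hY.mem_iff_le_row _ _).1 hrp).2
  have h1 := ((hY.mem_iff_le_col _ _).1 hpc).2
  exact hpu (Prod.ext (by omega) (by omega))

lemma armSqSum_erase (hY : IsYoung Y) {r c : ℕ} (hu : (r, c) ∈ Y) (hrow : row Y r = c) :
    armSqSum Y = armSqSum (Y.erase (r, c)) + ∑ j ∈ Ico 1 (min r c), (2 * ((c : ℤ) - j) - 1) := by
  have hc : 1 ≤ c := (hY.1 _ hu).2
  have hcells : (Y.erase (r, c)).filter (fun u => u.1 = r ∧ u.2 < u.1) =
      (Ico 1 (min r c)).image (Prod.mk r) := by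
    ext ⟨a, b⟩
    simp only [mem_filter, mem_erase, mem_image, mem_Ico, lt_min_iff, Prod.mk.injEq, ne_eq]
    constructor
    · rintro ⟨⟨hne, hab⟩, rfl, hba⟩
      have := (hY.mem_iff_le_row a b).1 hab
      exact ⟨b, ⟨this.1, hba, by omega⟩, rfl, rfl⟩
    · rintro ⟨b, ⟨hb1, hbr, hbc⟩, rfl, rfl⟩
      exact ⟨⟨by omega, (hY.mem_iff_le_row _ _).2 ⟨hb1, by omega⟩⟩, rfl, hbr⟩
  have hdiff : ∀ u ∈ Y.erase (r, c),
      (if u.2 < u.1 then ((row Y u.1 : ℤ) - u.2) ^ 2 else 0) =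
        (if u.2 < u.1 then ((row (Y.erase (r, c)) u.1 : ℤ) - u.2) ^ 2 else 0) +
          if u.1 = r ∧ u.2 < u.1 then 2 * ((c : ℤ) - u.2) - 1 else 0 := by
    intro u _
    by_cases hur : u.1 = r
    · rw [hur, row_erase_self hu, hrow]
      split_ifs <;> first | omega | (push_cast [Nat.cast_sub hc]; ring)
    · rw [row_erase_of_ne Y hur]
      simp [hur]
  rw [armSqSum, armSqSum, sum_filter, sum_filter, ← sum_erase_add _ _ hu, sum_congr rfl hdiff,
    sum_add_distrib, ← sum_filter (fun u : ℕ × ℕ => u.1 = r ∧ u.2 < u.1), hcells,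
    sum_image fun _ _ _ _ h => Prod.mk_right_injective r h, hrow]
  simp

lemma armSqSum_add_armSqSum_transpose (hY : IsYoung Y) :
    armSqSum Y + armSqSum (_root_.transpose Y) =
      ∑ u ∈ Y, 2 * ((u.1 : ℤ) - 1) * ((u.2 : ℤ) - 1) := by
  induction Y using Finset.strongInduction with
  | H Y ih =>
  rcases Y.eq_empty_or_nonempty with rfl | hne
  · simp [armSqSum, _root_.transpose]
  obtain ⟨r, c, hu, hrow, hcol⟩ := hY.exists_corner hne
  have hr : 1 ≤ r := (hY.1 _ hu).1
  have hc : 1 ≤ c := (hY.1 _ hu).2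
  have hT := hY.transpose.armSqSum_erase (r := c) (c := r) (mem_transpose.2 hu)
    (by rw [row_transpose, hcol])
  rw [← Prod.swap_prod_mk, ← transpose_erase] at hT
  rw [hY.armSqSum_erase hu hrow, hT, ← sum_erase_add _ _ hu,
    ← ih _ (erase_ssubset hu) (hY.erase_corner hu hrow hcol),
    sum_Ico_two_mul_sub_one _ (le_min hr hc), sum_Ico_two_mul_sub_one _ (le_min hc hr)]
  rcases le_total r c with h | h
  · rw [min_eq_left h, min_eq_right h]; ring
  · rw [min_eq_right h, min_eq_left h]; ring

end IsYoung

theorem card_rects_eq_hook_add_half (Y : Finset (ℕ × ℕ)) (hY : IsYoung Y) :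
    2 * ((rects Y).card : ℤ) = 2 * ∑ u ∈ Y, hk Y u + ∑ u ∈ Y, (phk Y u) ^ 2 := by
  rw [hY.card_rects, hY.sum_hk, sum_phk_sq_eq_armSqSum, hY.armSqSum_add_armSqSum_transpose]
  push_cast
  rw [mul_sum, mul_sum, ← sum_add_distrib]
  exact sum_congr rfl fun u _ => by ring
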